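/- arXiv:2008.06501 — 7 statements merged into one kernel-verified Lean document; each statement's English description precedes it below -/
import Mathlib

section
/- Let (S,+) be a commutative cancellative semigroup and let (S−S,+) denote its difference group (the group of differences a−b for a,b ∈ S, into which S canonically embeds). If A ⊆ S is thick in S, then A is thick in S−S. -/
/-- A subset `A` of an additive semigroup `T` is *thick* if for every finite nonempty
subset `F` of `T` there exists `x ∈ T` with `F + x ⊆ A`. -/
def AddThick {T : Type*} [Add T] (A : Set T) : Prop :=
  ∀ F : Finset T, F.Nonempty → ∃ x : T, ∀ f ∈ F, f + x ∈ A

/-! If `S` sits in `G` so that every element of `G` is a difference of elements of `S`, then every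
finite `F ⊆ G` is moved into `S` by a translate: clear the "denominators" `b` of `g = a - b`,
`g ∈ F`, by adding their sum. So `S` is thick in `G`, and translating further by a witness of
the thickness of `A` in `S` moves `F` into `A`. -/

namespace AddSubsemigroup

variable {G : Type*} [AddCommGroup G] (H : AddSubsemigroup G)

theorem exists_mem_forall_add_mem_of_forall_eq_sub
    (hH : ∀ g : G, ∃ a ∈ H, ∃ b ∈ H, g = a - b) {F : Finset G} (hF : F.Nonempty) :
    ∃ x ∈ H, ∀ g ∈ F, g + x ∈ H := by
  induction hF using Finset.Nonempty.cons_induction with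
  | singleton g =>
    obtain ⟨a, ha, b, hb, rfl⟩ := hH g
    exact ⟨b, hb, by simpa⟩
  | cons g F _ _ ih =>
    obtain ⟨x, hx, hFx⟩ := ih
    obtain ⟨a, ha, b, hb, rfl⟩ := hH g
    refine ⟨x + b, H.add_mem hx hb, ?_⟩
    simp only [Finset.mem_cons, forall_eq_or_imp]
    refine ⟨by convert H.add_mem ha hx using 1; abel, fun f hf => ?_⟩
    simpa [add_assoc] using H.add_mem (hFx f hf) hb

theorem addThick_of_forall_eq_sub (hH : ∀ g : G, ∃ a ∈ H, ∃ b ∈ H, g = a - b) :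
    AddThick (H : Set G) := fun _ hF =>
  let ⟨x, _, hx⟩ := H.exists_mem_forall_add_mem_of_forall_eq_sub hH hF
  ⟨x, hx⟩

end AddSubsemigroup

theorem AddThick.image {S G : Type*} [Add S] [AddSemigroup G] (φ : S →ₙ+ G)
    (hφ : AddThick (Set.range φ)) {A : Set S} (hA : AddThick A) : AddThick (φ '' A) := by
  classical
  intro F hF
  obtain ⟨x, hx⟩ := hφ F hF
  choose c hc using hx
  obtain ⟨t, ht⟩ := hA (F.attach.image fun g : F => c g.1 g.2) (hF.attach.image _)
  refine ⟨x + φ t, fun g hg => ⟨c g hg + t, ?_, ?_⟩⟩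
  · exact ht _ (Finset.mem_image_of_mem _ (F.mem_attach ⟨g, hg⟩))
  · rw [map_add, hc, add_assoc]

theorem addThick_image_of_addThick_general {S G : Type*} [AddCommSemigroup S]
    [AddCommGroup G] (φ : S → G)
    (hhom : ∀ x y : S, φ (x + y) = φ x + φ y)
    (hdiff : ∀ g : G, ∃ a b : S, g = φ a - φ b)
    (A : Set S) (hA : AddThick A) : AddThick (φ '' A) := by
  let ψ : S →ₙ+ G := ⟨φ, hhom⟩
  have hψ : AddThick (Set.range ψ) := by
    rw [← AddHom.coe_srange]
    refine ψ.srange.addThick_of_forall_eq_sub fun g => ?_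
    obtain ⟨a, b, rfl⟩ := hdiff g
    exact ⟨ψ a, ⟨a, rfl⟩, ψ b, ⟨b, rfl⟩, rfl⟩
  exact AddThick.image ψ hψ hA

/-- Let `(S,+)` be a commutative cancellative semigroup and let `(G,+)` together with the
injective additive embedding `φ : S → G` be its difference group (every element of `G`
is a difference `φ a - φ b` with `a, b ∈ S`).  If `A ⊆ S` is thick in `S`, then `A`
(regarded via `φ` as a subset of `G`) is thick in `G`. -/
theorem addThick_image_of_addThick {S G : Type*} [AddCommSemigroup S] [IsCancelAdd S]
    [AddCommGroup G] (φ : S → G) (hinj : Function.Injective φ)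
    (hhom : ∀ x y : S, φ (x + y) = φ x + φ y)
    (hdiff : ∀ g : G, ∃ a b : S, g = φ a - φ b)
    (A : Set S) (hA : AddThick A) : AddThick (φ '' A) :=
  addThick_image_of_addThick_general φ hhom hdiff A hA
end

section
/- Let (S,+) be a commutative cancellative semigroup and let (S−S,+) denote its difference group. If A ⊆ S is piecewise syndetic in S, then A is piecewise syndetic in S−S. -/
/-- A subset `A` of an additive semigroup `T` is *piecewise syndetic* if there is a finite
nonempty `G ⊆ T` such that for every finite nonempty `F ⊆ T` there is `x ∈ T` with
`F + x ⊆ ⋃_{t ∈ G} (-t + A)`, where `-t + A = {y | t + y ∈ A}`. -/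
def AddPiecewiseSyndetic {T : Type*} [Add T] (A : Set T) : Prop :=
  ∃ G : Finset T, G.Nonempty ∧ ∀ F : Finset T, F.Nonempty →
    ∃ x : T, ∀ f ∈ F, ∃ t ∈ G, t + (f + x) ∈ A

/-- Let `(S,+)` be a commutative cancellative semigroup and let `(G,+)` together with the
injective additive embedding `φ : S → G` be its difference group.  If `A ⊆ S` is
piecewise syndetic in `S`, then `A` is piecewise syndetic in `G = S - S`. -/
theorem addPiecewiseSyndetic_image_of_addPiecewiseSyndetic {S G : Type*}
    [AddCommSemigroup S] [IsCancelAdd S] [AddCommGroup G]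
    (φ : S → G) (hinj : Function.Injective φ)
    (hhom : ∀ x y : S, φ (x + y) = φ x + φ y)
    (hdiff : ∀ g : G, ∃ a b : S, g = φ a - φ b)
    (A : Set S) (hA : AddPiecewiseSyndetic A) : AddPiecewiseSyndetic (φ '' A) := by
  classical
  obtain ⟨G₀, hG₀ne, hG₀⟩ := hA
  obtain ⟨a0, b0, _⟩ := hdiff 0
  have key : ∀ F : Finset G, ∃ b : S, ∀ f ∈ F, ∃ s : S, φ s = f + φ b := by
    intro F
    induction F using Finset.induction_on with
    | empty => exact ⟨a0, by simp⟩
    | @insert f F hf ih =>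
      obtain ⟨b, hb⟩ := ih
      obtain ⟨a, c, hfc⟩ := hdiff f
      refine ⟨c + b, fun g hg => ?_⟩
      rcases Finset.mem_insert.mp hg with rfl | hg
      · exact ⟨a + b, by rw [hhom, hhom, hfc]; abel⟩
      · obtain ⟨s, hs⟩ := hb g hg
        exact ⟨s + c, by rw [hhom, hhom, hs]; abel⟩
  refine ⟨G₀.image φ, hG₀ne.image φ, ?_⟩
  intro F hF
  obtain ⟨b, hb⟩ := key F
  choose s hs using hb
  have hF'ne : (F.attach.image (fun f => s f.1 f.2)).Nonempty :=
    (hF.attach).image _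
  obtain ⟨x, hx⟩ := hG₀ _ hF'ne
  refine ⟨φ x + φ b, fun f hf => ?_⟩
  obtain ⟨t, ht, hmem⟩ := hx (s f hf)
    (Finset.mem_image.mpr ⟨⟨f, hf⟩, Finset.mem_attach _ _, rfl⟩)
  refine ⟨φ t, Finset.mem_image_of_mem φ ht, ⟨t + (s f hf + x), hmem, ?_⟩⟩
  rw [hhom, hhom, hs f hf]
  abel
end

section
/- Let (S,+) be a commutative cancellative semigroup and let (S−S,+) denote its difference group. If a family 𝒜 of subsets of S is collectionwise piecewise syndetic in S, then 𝒜 (with each member regarded as a subset of S−S) is collectionwise piecewise syndetic in S−S. -/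
/-- A family `𝒜` of subsets of an additive semigroup `T` is *collectionwise piecewise
syndetic* if there exist functions `K` from the finite nonempty subfamilies of `𝒜` to the
finite nonempty subsets of `T`, and `x` from (finite nonempty subfamilies of `𝒜`) ×
(finite nonempty subsets of `T`) to `T`, such that for every finite nonempty `F ⊆ T` and
all finite nonempty subfamilies `ℱ ⊆ ℋ` of `𝒜` one has
`F + x(ℋ,F) ⊆ ⋃_{t ∈ K(ℱ)} (-t + ⋂ℱ)`. -/
def AddCollectionwisePS {T : Type*} [Add T] (𝒜 : Set (Set T)) : Prop :=
  ∃ (K : {ℱ : Finset (Set T) // ℱ.Nonempty ∧ (↑ℱ : Set (Set T)) ⊆ 𝒜} →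
        {B : Finset T // B.Nonempty})
    (x : {ℱ : Finset (Set T) // ℱ.Nonempty ∧ (↑ℱ : Set (Set T)) ⊆ 𝒜} →
        {F : Finset T // F.Nonempty} → T),
    ∀ (F : {F : Finset T // F.Nonempty})
      (ℱ ℋ : {ℱ : Finset (Set T) // ℱ.Nonempty ∧ (↑ℱ : Set (Set T)) ⊆ 𝒜}),
      ℱ.1 ⊆ ℋ.1 →
      ∀ f ∈ F.1, ∃ t ∈ (K ℱ).1, t + (f + x ℋ F) ∈ ⋂₀ (↑ℱ.1 : Set (Set T))

private lemma aux_sum_mem_range {S G : Type*} [Add S] [AddCommGroup G] (φ : S → G)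
    (hhom : ∀ x y : S, φ (x + y) = φ x + φ y)
    {ι : Type*} [DecidableEq ι] (F : Finset ι) (d : ι → S) (c : S) :
    ∃ s : S, φ s = φ c + ∑ i ∈ F, φ (d i) := by
  classical
  induction F using Finset.induction_on with
  | empty => exact ⟨c, by simp⟩
  | @insert i F hi ih =>
      obtain ⟨s, hs⟩ := ih
      refine ⟨d i + s, ?_⟩
      rw [hhom, Finset.sum_insert hi, hs]
      abel

/-- Let `(S,+)` be a commutative cancellative semigroup and let `(G,+)` together with the
injective additive embedding `φ : S → G` be its difference group.  If a family `𝒜` of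
subsets of `S` is collectionwise piecewise syndetic in `S`, then the family
`{φ '' A : A ∈ 𝒜}` (each member regarded as a subset of `G = S - S`) is collectionwise
piecewise syndetic in `G`. -/
theorem addCollectionwisePS_image_of_addCollectionwisePS {S G : Type*}
    [AddCommSemigroup S] [IsCancelAdd S] [AddCommGroup G]
    (φ : S → G) (hinj : Function.Injective φ)
    (hhom : ∀ x y : S, φ (x + y) = φ x + φ y)
    (hdiff : ∀ g : G, ∃ a b : S, g = φ a - φ b)
    (𝒜 : Set (Set S)) (h𝒜 : AddCollectionwisePS 𝒜) :
    AddCollectionwisePS ((fun A => φ '' A) '' 𝒜) := by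
  classical
  obtain ⟨K, x, hKx⟩ := h𝒜
  -- preimage map on sets
  let ψ : Set G → Set S := fun B => if h : ∃ A ∈ 𝒜, φ '' A = B then h.choose else ∅
  have hψ : ∀ B ∈ ((fun A => φ '' A) '' 𝒜), ψ B ∈ 𝒜 ∧ φ '' ψ B = B := by
    intro B hB
    obtain ⟨A, hA, hAB⟩ := hB
    have hex : ∃ A ∈ 𝒜, φ '' A = B := ⟨A, hA, hAB⟩
    simp only [ψ, dif_pos hex]
    exact ⟨hex.choose_spec.1, hex.choose_spec.2⟩
  -- preimage map on families
  let Ψ : {ℱ : Finset (Set G) // ℱ.Nonempty ∧ (↑ℱ : Set (Set G)) ⊆ (fun A => φ '' A) '' 𝒜} →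
      {ℱ : Finset (Set S) // ℱ.Nonempty ∧ (↑ℱ : Set (Set S)) ⊆ 𝒜} :=
    fun ℱ => ⟨ℱ.1.image ψ, ℱ.2.1.image ψ, by
      intro A hA
      simp only [Finset.coe_image, Set.mem_image] at hA
      obtain ⟨B, hB, rfl⟩ := hA
      exact (hψ B (ℱ.2.2 hB)).1⟩
  have hΨmono : ∀ ℱ ℋ, ℱ.1 ⊆ ℋ.1 → (Ψ ℱ).1 ⊆ (Ψ ℋ).1 :=
    fun ℱ ℋ h => Finset.image_subset_image h
  -- difference representations
  let b : G → S := fun g => (hdiff g).choose_spec.choose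
  let a : G → S := fun g => (hdiff g).choose
  have hab : ∀ g : G, g = φ (a g) - φ (b g) := fun g => (hdiff g).choose_spec.choose_spec
  let γ : {F : Finset G // F.Nonempty} → G :=
    fun F => (∑ g ∈ F.1, φ (b g)) + (∑ g ∈ F.1, φ (b g))
  have hclaim : ∀ (F : {F : Finset G // F.Nonempty}) (g : G), g ∈ F.1 →
      ∃ s : S, φ s = g + γ F := by
    intro F g hg
    obtain ⟨s, hs⟩ := aux_sum_mem_range φ hhom (F.1.erase g) (fun h => b h + b h) (a g + b g)
    refine ⟨s, ?_⟩
    have hsum : ∑ h ∈ F.1, φ (b h) = φ (b g) + ∑ h ∈ F.1.erase g, φ (b h) :=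
      (Finset.add_sum_erase _ _ hg).symm
    have hdd : ∑ h ∈ F.1.erase g, φ (b h + b h)
        = (∑ h ∈ F.1.erase g, φ (b h)) + ∑ h ∈ F.1.erase g, φ (b h) := by
      rw [← Finset.sum_add_distrib]
      exact Finset.sum_congr rfl fun h _ => hhom _ _
    have h2 : g + φ (b g) = φ (a g) := eq_sub_iff_add_eq.mp (hab g)
    rw [hs, hhom, hdd]
    simp only [γ]
    rw [hsum, ← h2]
    abel
  -- the translated finite set in S
  let Fm : {F : Finset G // F.Nonempty} → {F : Finset S // F.Nonempty} :=
    fun F => ⟨F.1.attach.image (fun g => (hclaim F g.1 g.2).choose),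
      (F.2.attach).image _⟩
  refine ⟨fun ℱ => ⟨(K (Ψ ℱ)).1.image φ, ((K (Ψ ℱ)).2).image φ⟩,
    fun ℋ F => γ F + φ (x (Ψ ℋ) (Fm F)), ?_⟩
  intro F ℱ ℋ hsub g hg
  obtain ⟨t, ht, htmem⟩ := hKx (Fm F) (Ψ ℱ) (Ψ ℋ) (hΨmono ℱ ℋ hsub)
    ((hclaim F g hg).choose) (Finset.mem_image.2 ⟨⟨g, hg⟩, Finset.mem_attach _ _, rfl⟩)
  refine ⟨φ t, Finset.mem_image_of_mem φ ht, ?_⟩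
  have key : φ t + (g + (γ F + φ (x (Ψ ℋ) (Fm F))))
      = φ (t + ((hclaim F g hg).choose + x (Ψ ℋ) (Fm F))) := by
    rw [hhom, hhom, (hclaim F g hg).choose_spec]
    abel
  rw [key]
  intro B hB
  have hBmem : B ∈ (↑ℱ.1 : Set (Set G)) := hB
  have hψB : ψ B ∈ (↑(Ψ ℱ).1 : Set (Set S)) := by
    simp only [Ψ, Finset.coe_image]
    exact Set.mem_image_of_mem ψ hBmem
  have := htmem (ψ B) hψB
  have hBeq := (hψ B (ℱ.2.2 hBmem)).2
  rw [← hBeq]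
  exact Set.mem_image_of_mem φ this
end

section
/- Let (S,+) be a commutative cancellative semigroup and let (S−S,+) denote its difference group. If A ⊆ S is a J-set in S, then A is a J-set in S−S. -/
/-- Left fold of addition: `addList x [y₁,…,yₙ] = x + y₁ + ⋯ + yₙ`.  This expresses the
sum of a nonempty finite list of elements of a semigroup (no identity needed). -/
def addList {T : Type*} [Add T] : T → List T → T
  | x, [] => x
  | x, y :: l => addList (x + y) l

/-- A subset `A` of a commutative additive semigroup `T` is a *J-set* if for every finite
nonempty set `F` of sequences `f : ℕ → T` there exist `a ∈ T` and a finite nonempty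
`H ⊆ ℕ` (encoded as a strictly increasing list `t₀ :: ts`) such that
`a + Σ_{t ∈ H} f(t) ∈ A` for every `f ∈ F`. -/
def AddJSet {T : Type*} [Add T] (A : Set T) : Prop :=
  ∀ F : Finset (ℕ → T), F.Nonempty →
    ∃ (a : T) (t₀ : ℕ) (ts : List ℕ), (t₀ :: ts).Chain' (· < ·) ∧
      ∀ f ∈ F, a + addList (f t₀) (ts.map f) ∈ A

/-!
Write every element of `G` as `φ a - φ b`. For finitely many sequences `f ∈ F` one can then
choose a single correction sequence `c` such that every `f t + c t` lies in the range of `φ`: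
adding the subtracted parts `φ b` of all the `f t` turns each `f t` into a sum of values of `φ`.
Lifting the corrected sequences to `S` and applying the J-set property there, the correction is
absorbed into the shift `a`, since `Σ_{t∈H} (f t + c t) = Σ_{t∈H} c t + Σ_{t∈H} f t`.
-/

theorem map_addList {M N : Type*} [Add M] [Add N] (φ : M →ₙ+ N) (x : M) (l : List M) :
    φ (addList x l) = addList (φ x) (l.map φ) := by
  induction l generalizing x with
  | nil => rfl
  | cons y l ih => simp only [addList, List.map_cons, ih, map_add]

theorem addList_map_add {ι T : Type*} [AddCommSemigroup T] (x y : T) (l : List ι)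
    (f g : ι → T) :
    addList (x + y) (l.map fun i => f i + g i) = addList x (l.map f) + addList y (l.map g) := by
  induction l generalizing x y with
  | nil => rfl
  | cons i l ih =>
    simp only [addList, List.map_cons]
    rw [add_add_add_comm, ih]

theorem AddSubsemigroup.exists_forall_add_mem {G : Type*} [AddCommGroup G]
    (P : AddSubsemigroup G) (hP : ∀ g : G, ∃ a ∈ P, ∃ b ∈ P, g = a - b) (s : Finset G) :
    ∃ c : G, ∀ g ∈ s, g + c ∈ P := by
  classical
  induction s using Finset.induction_on with
  | empty => exact ⟨0, by simp⟩
  | insert g s _ ih =>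
    obtain ⟨c, hc⟩ := ih
    obtain ⟨a, ha, b, hb, hab⟩ := hP (g + c)
    refine ⟨c + b, Finset.forall_mem_insert _ _ _ |>.mpr ⟨?_, fun x hx => ?_⟩⟩
    · rwa [← add_assoc, hab, sub_add_cancel]
    · rw [← add_assoc]
      exact P.add_mem (hc x hx) hb

theorem AddJSet.image_of_forall_exists_add_mem_srange {S T : Type*} [Add S]
    [AddCommSemigroup T] {A : Set S} (hA : AddJSet A) (φ : S →ₙ+ T)
    (hφ : ∀ F : Finset (ℕ → T), ∃ c : ℕ → T, ∀ f ∈ F, ∀ t, f t + c t ∈ φ.srange) :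
    AddJSet (φ '' A) := by
  classical
  intro F hF
  obtain ⟨c, hc⟩ := hφ F
  -- `choose!` needs `S` inhabited to extend the lifts `σ` beyond `F`
  have : Nonempty S := let ⟨f, hf⟩ := hF; ⟨(hc f hf 0).choose⟩
  choose! σ hσ using hc
  obtain ⟨a, t₀, ts, hchain, hmem⟩ := hA (F.image σ) (hF.image σ)
  refine ⟨φ a + addList (c t₀) (ts.map c), t₀, ts, hchain, fun f hf =>
    ⟨_, hmem (σ f) (Finset.mem_image_of_mem σ hf), ?_⟩⟩
  have hlift : ts.map (φ ∘ σ f) = ts.map fun t => f t + c t :=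
    List.map_congr_left fun t _ => hσ f hf t
  rw [map_add, map_addList, List.map_map, hlift, hσ f hf t₀, addList_map_add,
    add_comm (addList _ _), add_assoc]

theorem addJSet_image_of_addJSet_general {S G : Type*}
    [AddCommSemigroup S] [AddCommGroup G]
    (φ : S → G)
    (hhom : ∀ x y : S, φ (x + y) = φ x + φ y)
    (hdiff : ∀ g : G, ∃ a b : S, g = φ a - φ b)
    (A : Set S) (hA : AddJSet A) : AddJSet (φ '' A) := by
  let ψ : S →ₙ+ G := ⟨φ, hhom⟩
  have hψ : ∀ g : G, ∃ a ∈ ψ.srange, ∃ b ∈ ψ.srange, g = a - b := fun g =>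
    let ⟨a, b, hab⟩ := hdiff g
    ⟨φ a, ⟨a, rfl⟩, φ b, ⟨b, rfl⟩, hab⟩
  classical
  refine hA.image_of_forall_exists_add_mem_srange ψ fun F => ?_
  choose c hc using fun t => ψ.srange.exists_forall_add_mem hψ (F.image (· t))
  exact ⟨c, fun f hf t => hc t _ (Finset.mem_image_of_mem _ hf)⟩

/-- Let `(S,+)` be a commutative cancellative semigroup and let `(G,+)` together with the
injective additive embedding `φ : S → G` be its difference group.  If `A ⊆ S` is a J-set
in `S`, then `A` is a J-set in `G = S - S`. -/
theorem addJSet_image_of_addJSet {S G : Type*}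
    [AddCommSemigroup S] [IsCancelAdd S] [AddCommGroup G]
    (φ : S → G) (hinj : Function.Injective φ)
    (hhom : ∀ x y : S, φ (x + y) = φ x + φ y)
    (hdiff : ∀ g : G, ∃ a b : S, g = φ a - φ b)
    (A : Set S) (hA : AddJSet A) : AddJSet (φ '' A) :=
  addJSet_image_of_addJSet_general φ hhom hdiff A hA
end

section
/- Let Φ : (S,·) → (T,·) be a semigroup homomorphism such that Φ(S) is piecewise syndetic in T. If A ⊆ S is piecewise syndetic in S, then Φ(A) is piecewise syndetic in T. -/
/-- A subset `A` of a semigroup `T` is *piecewise syndetic* if there is a finite nonempty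
`G ⊆ T` such that for every finite nonempty `F ⊆ T` there is `x ∈ T` with
`F·x ⊆ ⋃_{t ∈ G} t⁻¹A`, where `t⁻¹A = {y | t·y ∈ A}`. -/
def MulPiecewiseSyndetic {T : Type*} [Mul T] (A : Set T) : Prop :=
  ∃ G : Finset T, G.Nonempty ∧ ∀ F : Finset T, F.Nonempty →
    ∃ x : T, ∀ f ∈ F, ∃ t ∈ G, t * (f * x) ∈ A

/-- If `Φ : S → T` is a semigroup homomorphism such that `Φ(S)` is piecewise syndetic in
`T`, and `A ⊆ S` is piecewise syndetic in `S`, then `Φ(A)` is piecewise syndetic in `T`. -/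
theorem mulPiecewiseSyndetic_image_of_mulPiecewiseSyndetic {S T : Type*}
    [Semigroup S] [Semigroup T] (Φ : S → T)
    (hΦ : ∀ x y : S, Φ (x * y) = Φ x * Φ y)
    (hrange : MulPiecewiseSyndetic (Set.range Φ))
    (A : Set S) (hA : MulPiecewiseSyndetic A) : MulPiecewiseSyndetic (Φ '' A) := by
  classical
  obtain ⟨GA, hGAne, hGA⟩ := hA
  obtain ⟨H, hHne, hH⟩ := hrange
  refine ⟨(GA ×ˢ H).image (fun p => Φ p.1 * p.2),
    (hGAne.product hHne).image _, ?_⟩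
  intro F hF
  obtain ⟨y, hy⟩ := hH F hF
  choose h hhH s hs using hy
  set F' : Finset S := F.attach.image (fun f => s f.1 f.2) with hF'
  have hF'ne : F'.Nonempty := ⟨_, Finset.mem_image.mpr ⟨⟨hF.choose, hF.choose_spec⟩, Finset.mem_attach _ _, rfl⟩⟩
  obtain ⟨x, hx⟩ := hGA F' hF'ne
  refine ⟨y * Φ x, ?_⟩
  intro f hf
  have hmem : s f hf ∈ F' := Finset.mem_image.mpr ⟨⟨f, hf⟩, Finset.mem_attach _ _, rfl⟩
  obtain ⟨t, htGA, htA⟩ := hx _ hmem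
  refine ⟨Φ t * h f hf, Finset.mem_image.mpr ⟨⟨t, h f hf⟩,
    Finset.mem_product.mpr ⟨htGA, hhH f hf⟩, rfl⟩, ?_⟩
  refine ⟨t * (s f hf * x), htA, ?_⟩
  simp [hΦ, hs f hf, mul_assoc]
end

section
/- Let Φ : (S,·) → (T,·) be a semigroup homomorphism such that Φ(S) is piecewise syndetic in T. If a family 𝒜 of subsets of S is collectionwise piecewise syndetic in S, then the family Φ(𝒜) = { Φ(A) : A ∈ 𝒜 } is collectionwise piecewise syndetic in T. -/
/-- A family `𝒜` of subsets of a semigroup `T` is *collectionwise piecewise syndetic* if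
there exist functions `K` from the finite nonempty subfamilies of `𝒜` to the finite
nonempty subsets of `T`, and `x` from (finite nonempty subfamilies of `𝒜`) × (finite
nonempty subsets of `T`) to `T`, such that for every finite nonempty `F ⊆ T` and all
finite nonempty subfamilies `ℱ ⊆ ℋ` of `𝒜` one has
`F·x(ℋ,F) ⊆ ⋃_{t ∈ K(ℱ)} t⁻¹(⋂ℱ)`, where `t⁻¹A = {y | t·y ∈ A}`. -/
def MulCollectionwisePS {T : Type*} [Mul T] (𝒜 : Set (Set T)) : Prop :=
  ∃ (K : {ℱ : Finset (Set T) // ℱ.Nonempty ∧ (↑ℱ : Set (Set T)) ⊆ 𝒜} →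
        {B : Finset T // B.Nonempty})
    (x : {ℱ : Finset (Set T) // ℱ.Nonempty ∧ (↑ℱ : Set (Set T)) ⊆ 𝒜} →
        {F : Finset T // F.Nonempty} → T),
    ∀ (F : {F : Finset T // F.Nonempty})
      (ℱ ℋ : {ℱ : Finset (Set T) // ℱ.Nonempty ∧ (↑ℱ : Set (Set T)) ⊆ 𝒜}),
      ℱ.1 ⊆ ℋ.1 →
      ∀ f ∈ F.1, ∃ t ∈ (K ℱ).1, t * (f * x ℋ F) ∈ ⋂₀ (↑ℱ.1 : Set (Set T))

/-- If `Φ : S → T` is a semigroup homomorphism such that `Φ(S)` is piecewise syndetic in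
`T` (piecewise syndetic: there is a finite nonempty `G ⊆ T` such that for every finite
nonempty `F ⊆ T` there is `x` with `F·x ⊆ ⋃_{t ∈ G} t⁻¹(Φ(S))`), and a family `𝒜` of
subsets of `S` is collectionwise piecewise syndetic in `S`, then
`Φ(𝒜) = {Φ(A) : A ∈ 𝒜}` is collectionwise piecewise syndetic in `T`. -/
theorem mulCollectionwisePS_image_of_mulCollectionwisePS {S T : Type*}
    [Semigroup S] [Semigroup T] (Φ : S → T)
    (hΦ : ∀ x y : S, Φ (x * y) = Φ x * Φ y)
    (hrange : ∃ G : Finset T, G.Nonempty ∧ ∀ F : Finset T, F.Nonempty →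
      ∃ x : T, ∀ f ∈ F, ∃ t ∈ G, t * (f * x) ∈ Set.range Φ)
    (𝒜 : Set (Set S)) (h𝒜 : MulCollectionwisePS 𝒜) :
    MulCollectionwisePS ((fun A => Φ '' A) '' 𝒜) := by
  classical
  obtain ⟨K, x, hKx⟩ := h𝒜
  obtain ⟨G, hGne, hGx⟩ := hrange
  -- a preimage function ψ : for B in the image family, ψ B ∈ 𝒜 and Φ '' (ψ B) = B
  set ψ : Set T → Set S := fun B =>
    if h : ∃ A, A ∈ 𝒜 ∧ Φ '' A = B then h.choose else ∅ with hψdef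
  have hψ1 : ∀ B, (∃ A, A ∈ 𝒜 ∧ Φ '' A = B) → ψ B ∈ 𝒜 := by
    intro B h; simp only [hψdef, dif_pos h]; exact h.choose_spec.1
  have hψ2 : ∀ B, (∃ A, A ∈ 𝒜 ∧ Φ '' A = B) → Φ '' (ψ B) = B := by
    intro B h; simp only [hψdef, dif_pos h]; exact h.choose_spec.2
  -- map subfamilies of Φ''𝒜 to subfamilies of 𝒜
  have hmem : ∀ (ℱ : {ℱ : Finset (Set T) //
      ℱ.Nonempty ∧ (↑ℱ : Set (Set T)) ⊆ (fun A => Φ '' A) '' 𝒜}),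
      ∀ B ∈ ℱ.1, ∃ A, A ∈ 𝒜 ∧ Φ '' A = B := by
    intro ℱ B hB
    exact ℱ.2.2 hB
  set Ψ : {ℱ : Finset (Set T) //
      ℱ.Nonempty ∧ (↑ℱ : Set (Set T)) ⊆ (fun A => Φ '' A) '' 𝒜} →
      {ℱ : Finset (Set S) // ℱ.Nonempty ∧ (↑ℱ : Set (Set S)) ⊆ 𝒜} :=
    fun ℱ => ⟨ℱ.1.image ψ, ℱ.2.1.image ψ, by
      intro A hA
      simp only [Finset.coe_image, Set.mem_image, Finset.mem_coe] at hA
      obtain ⟨B, hB, rfl⟩ := hA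
      exact hψ1 B (hmem ℱ B hB)⟩ with hΨdef
  -- choose z for the piecewise syndeticity of the range
  choose z hz using hGx
  have h2 : ∀ (F : Finset T) (hF : F.Nonempty) (f : T), f ∈ F →
      ∃ t, t ∈ G ∧ ∃ s : S, Φ s = t * (f * z F hF) := by
    intro F hF f hf
    obtain ⟨t, ht, y, hy⟩ := hz F hF f hf
    exact ⟨t, ht, y, hy⟩
  choose tG htG sS hsS using h2
  -- the finite subset of S associated to F
  set FS : ∀ F : {F : Finset T // F.Nonempty}, {F : Finset S // F.Nonempty} :=
    fun F => ⟨F.1.attach.image (fun f => sS F.1 F.2 f.1 f.2),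
      (Finset.attach_nonempty_iff.2 F.2).image _⟩ with hFSdef
  refine ⟨fun ℱ => ⟨(((K (Ψ ℱ)).1.image Φ) ×ˢ G).image (fun p => p.1 * p.2),
      (((K (Ψ ℱ)).2.image Φ).product hGne).image _⟩,
    fun ℋ F => z F.1 F.2 * Φ (x (Ψ ℋ) (FS F)), ?_⟩
  intro F ℱ ℋ hsub f hf
  obtain ⟨k, hk, hkmem⟩ := hKx (FS F) (Ψ ℱ) (Ψ ℋ)
    (Finset.image_subset_image hsub) (sS F.1 F.2 f hf)
    (Finset.mem_image.2 ⟨⟨f, hf⟩, Finset.mem_attach _ _, rfl⟩)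
  refine ⟨Φ k * tG F.1 F.2 f hf, ?_, ?_⟩
  · exact Finset.mem_image.2 ⟨(Φ k, tG F.1 F.2 f hf),
      Finset.mem_product.2 ⟨Finset.mem_image_of_mem Φ hk, htG F.1 F.2 f hf⟩, rfl⟩
  · have key : Φ k * tG F.1 F.2 f hf * (f * (z F.1 F.2 * Φ (x (Ψ ℋ) (FS F))))
        = Φ (k * (sS F.1 F.2 f hf * x (Ψ ℋ) (FS F))) := by
      rw [hΦ, hΦ, hsS F.1 F.2 f hf]
      simp only [mul_assoc]
    rw [key]
    intro B hB
    have hB' : B ∈ ℱ.1 := Finset.mem_coe.1 hB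
    have hψB : Φ '' (ψ B) = B := hψ2 B (hmem ℱ B hB')
    have : k * (sS F.1 F.2 f hf * x (Ψ ℋ) (FS F)) ∈ ψ B := by
      apply hkmem
      simp only [hΨdef, Finset.coe_image, Set.mem_image, Finset.mem_coe]
      exact ⟨B, hB', rfl⟩
    rw [← hψB]
    exact ⟨_, this, rfl⟩
end

section
/- Let G be a commutative group with identity 0, let k, n ∈ ℕ, let A : G^n → G^k be a group homomorphism, and let b ∈ G^k be nonzero. Then the equation A x = b is partition regular over G if and only if it has a constant solution, i.e. there exists y ∈ G such that A(y, y, …, y) = b. -/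
/-- Auxiliary coloring lemma: if `Φ : Gⁿ → ℚ/ℤ` is a homomorphism vanishing on constant
tuples and `γ ≠ 0`, then there is a finite coloring of `G` such that no monochromatic
tuple `x` satisfies `Φ x = γ`. -/
lemma rado_aux {G : Type*} [AddCommGroup G] {n : ℕ}
    (Φ : (Fin n → G) →+ AddCircle (1:ℚ))
    (hconst : ∀ y : G, Φ (fun _ => y) = 0) {γ : AddCircle (1:ℚ)} (hγ : γ ≠ 0) :
    ∃ (κ : Type) (_ : Finite κ) (χ : G → κ),
      ∀ x : Fin n → G, (∀ i j : Fin n, χ (x i) = χ (x j)) → Φ x ≠ γ := by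
  -- representative in [0,1)
  set r : AddCircle (1:ℚ) → ℚ := fun z => (AddCircle.equivIco 1 0 z : ℚ) with hr
  have hr_coe : ∀ z, ((r z : ℚ) : AddCircle (1:ℚ)) = z := fun z =>
    (AddCircle.equivIco 1 0).symm_apply_apply z
  have hr_mem : ∀ z, r z ∈ Set.Ico (0:ℚ) 1 := fun z => by
    simpa using (AddCircle.equivIco 1 0 z).2
  obtain ⟨ht0_nonneg, ht0_lt⟩ := hr_mem γ
  have ht0_ne : r γ ≠ 0 := by
    intro h
    apply hγ
    rw [← hr_coe γ, h]
    simp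
  have ht0_pos : 0 < r γ := lt_of_le_of_ne ht0_nonneg (Ne.symm ht0_ne)
  set t₀ : ℚ := r γ with ht₀
  obtain ⟨ε, hε_pos, hεt1, hεt2⟩ : ∃ ε : ℚ, 0 < ε ∧ ε ≤ t₀ ∧ ε ≤ 1 - t₀ :=
    ⟨min t₀ (1 - t₀), lt_min ht0_pos (by linarith), min_le_left _ _, min_le_right _ _⟩
  obtain ⟨N, hNpos, hNε⟩ : ∃ N : ℕ, 0 < N ∧ (n:ℚ) < N * ε := by
    refine ⟨⌈(n:ℚ)/ε⌉₊ + 1, Nat.succ_pos _, ?_⟩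
    have h1 : (n:ℚ)/ε ≤ ⌈(n:ℚ)/ε⌉₊ := Nat.le_ceil _
    have h2 : ((⌈(n:ℚ)/ε⌉₊ : ℚ)) < ((⌈(n:ℚ)/ε⌉₊ + 1 : ℕ) : ℚ) := by push_cast; linarith
    have h3 : (n:ℚ)/ε < ((⌈(n:ℚ)/ε⌉₊ + 1 : ℕ) : ℚ) := lt_of_le_of_lt h1 h2
    calc (n:ℚ) = ((n:ℚ)/ε) * ε := by field_simp
      _ < _ := mul_lt_mul_of_pos_right h3 hε_pos
  have hNQpos : (0:ℚ) < N := by exact_mod_cast hNpos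
  -- the coloring
  have hcol : ∀ (g : G) (i : Fin n), (⌊(N:ℚ) * r (Φ (Pi.single i g))⌋).toNat < N := by
    intro g i
    obtain ⟨hm1, hm2⟩ := hr_mem (Φ (Pi.single i g))
    have : ⌊(N:ℚ) * r (Φ (Pi.single i g))⌋ < (N:ℤ) := by
      rw [Int.floor_lt]
      push_cast
      nlinarith
    omega
  refine ⟨Fin n → Fin N, inferInstance,
    fun g i => ⟨(⌊(N:ℚ) * r (Φ (Pi.single i g))⌋).toNat, hcol g i⟩, ?_⟩
  intro x hmono hΦx
  -- n = 0 is impossible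
  rcases Nat.eq_zero_or_pos n with hn0 | hnpos
  · subst hn0
    have hx0 : x = fun _ => (0:G) := funext fun i => i.elim0
    rw [hx0, hconst 0] at hΦx
    exact hγ hΦx.symm
  set i₀ : Fin n := ⟨0, hnpos⟩ with hi₀
  set u : Fin n → ℚ := fun i => r (Φ (Pi.single i (x i))) with hu
  set v : Fin n → ℚ := fun i => r (Φ (Pi.single i (x i₀))) with hv
  -- same color gives close representatives
  have hclose : ∀ i : Fin n, |u i - v i| ≤ 1 / N := by
    intro i
    have hcc := congrArg Fin.val (congrFun (hmono i i₀) i)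
    have hflooru : 0 ≤ ⌊(N:ℚ) * u i⌋ := by
      apply Int.floor_nonneg.2
      have := (hr_mem (Φ (Pi.single i (x i)))).1
      rw [hu]
      positivity
    have hfloorv : 0 ≤ ⌊(N:ℚ) * v i⌋ := by
      apply Int.floor_nonneg.2
      have := (hr_mem (Φ (Pi.single i (x i₀)))).1
      rw [hv]
      positivity
    have hcc' : (⌊(N:ℚ) * u i⌋).toNat = (⌊(N:ℚ) * v i⌋).toNat := hcc
    have hfe : ⌊(N:ℚ) * u i⌋ = ⌊(N:ℚ) * v i⌋ := by omega
    have h1 := Int.sub_one_lt_floor ((N:ℚ) * u i)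
    have h2 := Int.floor_le ((N:ℚ) * u i)
    have h3 := Int.sub_one_lt_floor ((N:ℚ) * v i)
    have h4 := Int.floor_le ((N:ℚ) * v i)
    rw [hfe] at h1 h2
    have habs : |(N:ℚ) * u i - (N:ℚ) * v i| < 1 := by
      rw [abs_sub_lt_iff]
      constructor <;> linarith
    have heq : |u i - v i| = |(N:ℚ) * u i - (N:ℚ) * v i| / N := by
      rw [← mul_sub, abs_mul, abs_of_pos hNQpos]
      field_simp
    rw [heq, div_le_div_iff₀ hNQpos hNQpos]
    nlinarith
  -- sums
  have hsum_u : ((∑ i, u i : ℚ) : AddCircle (1:ℚ)) = γ := by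
    have e1 : ((∑ i, u i : ℚ) : AddCircle (1:ℚ)) = ∑ i, ((u i : ℚ) : AddCircle (1:ℚ)) :=
      map_sum (QuotientAddGroup.mk' (AddSubgroup.zmultiples (1:ℚ))) u Finset.univ
    rw [e1]
    have h : ∀ i, ((u i : ℚ) : AddCircle (1:ℚ)) = Φ (Pi.single i (x i)) := fun i => hr_coe _
    rw [Finset.sum_congr rfl (fun i _ => h i), ← map_sum Φ, Finset.univ_sum_single x, hΦx]
  have hsum_v : ((∑ i, v i : ℚ) : AddCircle (1:ℚ)) = 0 := by
    have e1 : ((∑ i, v i : ℚ) : AddCircle (1:ℚ)) = ∑ i, ((v i : ℚ) : AddCircle (1:ℚ)) :=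
      map_sum (QuotientAddGroup.mk' (AddSubgroup.zmultiples (1:ℚ))) v Finset.univ
    rw [e1]
    have h : ∀ i, ((v i : ℚ) : AddCircle (1:ℚ)) = Φ (Pi.single i (x i₀)) := fun i => hr_coe _
    rw [Finset.sum_congr rfl (fun i _ => h i), ← map_sum Φ,
      Finset.univ_sum_single (fun _ => x i₀)]
    exact hconst (x i₀)
  -- integrality
  have hint : ((∑ i, u i - ∑ i, v i - t₀ : ℚ) : AddCircle (1:ℚ)) = 0 := by
    push_cast [AddCircle.coe_sub]
    rw [hsum_u, hsum_v, hr_coe γ]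
    abel
  rw [AddCircle.coe_eq_zero_iff] at hint
  obtain ⟨m, hm⟩ := hint
  have hm' : ∑ i, u i - ∑ i, v i - t₀ = (m : ℚ) := by rw [← hm]; simp
  -- bound on the difference
  have hd : |∑ i, u i - ∑ i, v i| < ε := by
    rw [← Finset.sum_sub_distrib]
    calc |∑ i, (u i - v i)| ≤ ∑ i, |u i - v i| := Finset.abs_sum_le_sum_abs _ _
      _ ≤ ∑ _i : Fin n, (1/N : ℚ) := Finset.sum_le_sum (fun i _ => hclose i)
      _ = n * (1/N) := by rw [Finset.sum_const]; simp [mul_comm]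
      _ < ε := by
          rw [mul_one_div, div_lt_iff₀ hNQpos]
          linarith
  rw [abs_lt] at hd
  have hm1 : (m:ℚ) < 0 := by linarith
  have hm2 : (-1:ℚ) < m := by linarith
  have hfin : (-1:ℤ) < m ∧ m < 0 := ⟨by exact_mod_cast hm2, by exact_mod_cast hm1⟩
  omega

/-- **Abstract Rado theorem.**  Let `G` be a commutative group with identity `0`, let
`k, n ∈ ℕ`, let `A : Gⁿ → Gᵏ` be a group homomorphism, and let `b ∈ Gᵏ` be nonzero.
Then the equation `A x = b` is partition regular over `G` (i.e. for every finite coloring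
of `G` there is a solution `x` all of whose coordinates get the same color) if and only
if it has a constant solution, i.e. there is `y ∈ G` with `A (y, y, …, y) = b`. -/
theorem abstract_rado {G : Type*} [AddCommGroup G] (k n : ℕ)
    (A : (Fin n → G) →+ (Fin k → G)) (b : Fin k → G) (hb : b ≠ 0) :
    (∀ (κ : Type) [Finite κ] (χ : G → κ),
      ∃ x : Fin n → G, A x = b ∧ ∀ i j : Fin n, χ (x i) = χ (x j)) ↔
    (∃ y : G, A (fun _ => y) = b) := by
  constructor
  · intro hPR
    by_contra hno
    push_neg at hno
    -- the homomorphism `y ↦ A (const y)`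
    have Tadd : ∀ a c : G, A (fun _ => a + c) = A (fun _ => a) + A (fun _ => c) := by
      intro a c
      rw [← map_add]
      rfl
    set T : G →+ (Fin k → G) := AddMonoidHom.mk' (fun y => A (fun _ => y)) Tadd with hT
    set q := QuotientAddGroup.mk' T.range with hq
    have hc : q b ≠ 0 := by
      intro h
      rw [hq, QuotientAddGroup.mk'_apply, QuotientAddGroup.eq_zero_iff] at h
      obtain ⟨y, hy⟩ := h
      exact hno y hy
    obtain ⟨χ, hχ⟩ := CharacterModule.exists_character_apply_ne_zero_of_ne_zero hc
    set χ' : ((Fin k → G) ⧸ T.range) →+ AddCircle (1:ℚ) := χ with hχ'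
    have hχeq : ∀ z, χ' z = χ z := fun _ => rfl
    set Φ : (Fin n → G) →+ AddCircle (1:ℚ) := χ'.comp (q.comp A) with hΦ
    have hΦconst : ∀ y : G, Φ (fun _ => y) = 0 := by
      intro y
      have h1 : q (A (fun _ => y)) = 0 := by
        rw [hq, QuotientAddGroup.mk'_apply, QuotientAddGroup.eq_zero_iff]
        exact ⟨y, rfl⟩
      show χ' (q (A (fun _ => y))) = 0
      rw [h1, map_zero]
    have hγ : χ' (q b) ≠ 0 := by rw [hχeq]; exact hχ
    obtain ⟨κ, hκ, col, hcol⟩ := rado_aux Φ hΦconst hγ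
    obtain ⟨x, hx, hmono⟩ := hPR κ col
    exact hcol x hmono (by show χ' (q (A x)) = χ' (q b); rw [hx])
  · rintro ⟨y, hy⟩ κ _ χ
    exact ⟨fun _ => y, hy, fun i j => rfl⟩
end
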